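/- arXiv:2105.05691 — 5 statements merged into one kernel-verified Lean document; each statement's English description precedes it below -/
import Mathlib

section
/- If T1 and T2 are quasi strictly nonexpansive self-mappings of a metric space (G,d) with Fix T1 ∩ Fix T2 ≠ ∅, then Fix(T1 ∘ T2) = Fix T1 ∩ Fix T2. -/
/-! A point `x` with `T1 (T2 x) = x` must already be fixed by `T2`: otherwise, measuring distances
to a common fixed point `z`, `T2` strictly decreases the distance of `x` to `z` and `T1` does not
increase it, so `d(x, z) = d(T1 (T2 x), z) ≤ d(T2 x, z) < d(x, z)`. -/

section

variable {G : Type*} [PseudoMetricSpace G]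

theorem dist_apply_le_of_apply_eq {T : G → G}
    (hT : ∀ x y : G, T y = y → T x ≠ x → dist (T x) y < dist x y) (x : G) {y : G}
    (hy : T y = y) : dist (T x) y ≤ dist x y := by
  by_cases hx : T x = x
  · rw [hx]
  · exact (hT x y hy hx).le

theorem apply_eq_of_comp_apply_eq {T1 T2 : G → G} {x z : G}
    (h1 : ∀ u, dist (T1 u) z ≤ dist u z) (h2 : T2 x ≠ x → dist (T2 x) z < dist x z)
    (hx : T1 (T2 x) = x) : T2 x = x := by
  by_contra hne
  have : dist x z < dist x z :=
    calc dist x z = dist (T1 (T2 x)) z := by rw [hx]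
      _ ≤ dist (T2 x) z := h1 _
      _ < dist x z := h2 hne
  exact lt_irrefl _ this

end

/-- If `T1` and `T2` are quasi strictly nonexpansive self-mappings of a metric space
with a common fixed point, then `Fix (T1 ∘ T2) = Fix T1 ∩ Fix T2`. -/
theorem fix_comp_of_quasi_strictly_nonexpansive {G : Type*} [MetricSpace G]
    (T1 T2 : G → G)
    (h1 : ∀ x y : G, T1 y = y → T1 x ≠ x → dist (T1 x) y < dist x y)
    (h2 : ∀ x y : G, T2 y = y → T2 x ≠ x → dist (T2 x) y < dist x y)
    (hne : ∃ z : G, T1 z = z ∧ T2 z = z) :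
    {x : G | T1 (T2 x) = x} = {x : G | T1 x = x} ∩ {x : G | T2 x = x} := by
  obtain ⟨z, hz1, hz2⟩ := hne
  ext x
  simp only [Set.mem_ofPred_eq, Set.mem_inter_iff]
  constructor
  · intro hx
    have hx2 : T2 x = x :=
      apply_eq_of_comp_apply_eq (fun u => dist_apply_le_of_apply_eq h1 u hz1) (h2 x z hz2) hx
    rw [hx2] at hx
    exact ⟨hx, hx2⟩
  · rintro ⟨hx1, hx2⟩
    rw [hx2, hx1]
end

section
/- Let (G,d) be a p-uniformly convex space with constant c > 0. Let T0: D → G be pointwise almost α-firmly nonexpansive at y with constant α₀ and violation ε₀ on D, and T1: T0(D) → G pointwise almost α-firmly nonexpansive at T0 y with constant α₁ and violation ε₁. If for some ᾱ ∈ (0,1) the inequality ((1−ᾱ)/ᾱ) ψ_{T1∘T0}(x,y) ≤ (1+ε₁)((1−α₀)/α₀) ψ_{T0}(x,y) + ((1−α₁)/α₁) ψ_{T1}(T0 x, T0 y) holds for all x ∈ D, then T1 ∘ T0 is pointwise almost α-firmly nonexpansive at y on D with constant ᾱ and violation ε₀ + ε₁ + ε₀ε₁. -/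
/-- The transport discrepancy of a mapping `T` in a `p`-uniformly convex space with constant `c`. -/
noncomputable def psi {G : Type*} [MetricSpace G] (p c : ℝ) (T : G → G) (x y : G) : ℝ :=
  c / 2 * (dist (T x) x ^ p + dist (T y) y ^ p + dist (T x) (T y) ^ p + dist x y ^ p
    - dist (T x) y ^ p - dist x (T y) ^ p)

section

variable {G : Type*} [MetricSpace G]

def PointwiseAlmostFirmlyNonexpansiveAt (p c α ε : ℝ) (D : Set G) (T : G → G) (y : G) : Prop :=
  ∀ x ∈ D, dist (T x) (T y) ^ p ≤ (1 + ε) * dist x y ^ p - (1 - α) / α * psi p c T x y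

theorem PointwiseAlmostFirmlyNonexpansiveAt.comp {p c α₀ α₁ abar ε₀ ε₁ : ℝ} {D : Set G}
    {T0 T1 : G → G} {y : G}
    (h0 : PointwiseAlmostFirmlyNonexpansiveAt p c α₀ ε₀ D T0 y)
    (h1 : PointwiseAlmostFirmlyNonexpansiveAt p c α₁ ε₁ (T0 '' D) T1 (T0 y))
    (hε₁ : -1 ≤ ε₁)
    (hpsi : ∀ x ∈ D, (1 - abar) / abar * psi p c (T1 ∘ T0) x y
        ≤ (1 + ε₁) * ((1 - α₀) / α₀ * psi p c T0 x y)
          + (1 - α₁) / α₁ * psi p c T1 (T0 x) (T0 y)) :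
    PointwiseAlmostFirmlyNonexpansiveAt p c abar (ε₀ + ε₁ + ε₀ * ε₁) D (T1 ∘ T0) y := by
  intro x hx
  have hε₁' : 0 ≤ 1 + ε₁ := by linarith
  calc dist (T1 (T0 x)) (T1 (T0 y)) ^ p
      ≤ (1 + ε₁) * dist (T0 x) (T0 y) ^ p - (1 - α₁) / α₁ * psi p c T1 (T0 x) (T0 y) :=
        h1 _ (Set.mem_image_of_mem T0 hx)
    _ ≤ (1 + ε₁) * ((1 + ε₀) * dist x y ^ p - (1 - α₀) / α₀ * psi p c T0 x y)
          - (1 - α₁) / α₁ * psi p c T1 (T0 x) (T0 y) := by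
        gcongr
        exact h0 x hx
    _ = (1 + (ε₀ + ε₁ + ε₀ * ε₁)) * dist x y ^ p
          - ((1 + ε₁) * ((1 - α₀) / α₀ * psi p c T0 x y)
            + (1 - α₁) / α₁ * psi p c T1 (T0 x) (T0 y)) := by ring
    _ ≤ (1 + (ε₀ + ε₁ + ε₀ * ε₁)) * dist x y ^ p
          - (1 - abar) / abar * psi p c (T1 ∘ T0) x y := sub_le_sub_left (hpsi x hx) _

end

theorem pafne_comp_general {G : Type*} [MetricSpace G] (p c : ℝ)
    (D : Set G) (T0 T1 : G → G) (y : G)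
    (α₀ α₁ abar ε₀ ε₁ : ℝ)
    (hε₁ : 0 ≤ ε₁)
    (h0 : ∀ x ∈ D, dist (T0 x) (T0 y) ^ p
        ≤ (1 + ε₀) * dist x y ^ p - (1 - α₀) / α₀ * psi p c T0 x y)
    (h1 : ∀ z ∈ T0 '' D, dist (T1 z) (T1 (T0 y)) ^ p
        ≤ (1 + ε₁) * dist z (T0 y) ^ p - (1 - α₁) / α₁ * psi p c T1 z (T0 y))
    (hkey : ∀ x ∈ D, (1 - abar) / abar * psi p c (T1 ∘ T0) x y
        ≤ (1 + ε₁) * ((1 - α₀) / α₀ * psi p c T0 x y)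
          + (1 - α₁) / α₁ * psi p c T1 (T0 x) (T0 y)) :
    ∀ x ∈ D, dist ((T1 ∘ T0) x) ((T1 ∘ T0) y) ^ p
      ≤ (1 + (ε₀ + ε₁ + ε₀ * ε₁)) * dist x y ^ p
        - (1 - abar) / abar * psi p c (T1 ∘ T0) x y :=
  PointwiseAlmostFirmlyNonexpansiveAt.comp (p := p) (c := c) h0 h1 (by linarith) hkey

/-- Composition of pointwise almost `α`-firmly nonexpansive maps: if the transport-discrepancy
inequality holds, then `T1 ∘ T0` is pointwise almost `α`-firmly nonexpansive at `y` on `D` with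
constant `ᾱ` and violation `ε₀ + ε₁ + ε₀ε₁`. -/
theorem pafne_comp {G : Type*} [MetricSpace G] (p c : ℝ) (hp : 1 < p) (hc : 0 < c)
    (D : Set G) (T0 T1 : G → G) (y : G) (hyD : y ∈ D)
    (α₀ α₁ abar ε₀ ε₁ : ℝ)
    (hα₀ : α₀ ∈ Set.Ioo (0:ℝ) 1) (hα₁ : α₁ ∈ Set.Ioo (0:ℝ) 1) (habar : abar ∈ Set.Ioo (0:ℝ) 1)
    (hε₀ : 0 ≤ ε₀) (hε₁ : 0 ≤ ε₁)
    (h0 : ∀ x ∈ D, dist (T0 x) (T0 y) ^ p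
        ≤ (1 + ε₀) * dist x y ^ p - (1 - α₀) / α₀ * psi p c T0 x y)
    (h1 : ∀ z ∈ T0 '' D, dist (T1 z) (T1 (T0 y)) ^ p
        ≤ (1 + ε₁) * dist z (T0 y) ^ p - (1 - α₁) / α₁ * psi p c T1 z (T0 y))
    (hkey : ∀ x ∈ D, (1 - abar) / abar * psi p c (T1 ∘ T0) x y
        ≤ (1 + ε₁) * ((1 - α₀) / α₀ * psi p c T0 x y)
          + (1 - α₁) / α₁ * psi p c T1 (T0 x) (T0 y)) :
    ∀ x ∈ D, dist ((T1 ∘ T0) x) ((T1 ∘ T0) y) ^ p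
      ≤ (1 + (ε₀ + ε₁ + ε₀ * ε₁)) * dist x y ^ p
        - (1 - abar) / abar * psi p c (T1 ∘ T0) x y :=
  pafne_comp_general p c D T0 T1 y α₀ α₁ abar ε₀ ε₁ hε₁ h0 h1 hkey
end

section
/- Let (G,d) be a symmetric perpendicular geodesic metric space and f: G → ℝ ∪ {+∞} proper, convex, lower semicontinuous with argmin f ≠ ∅. Then the proximal mapping prox^p_{f,λ} (λ > 0) is quasi nonexpansive: d(prox^p_{f,λ}(x), x̄) ≤ d(x, x̄) for all x ∈ G and x̄ ∈ argmin f. If in addition (G,d) is p-uniformly convex with constant c > 0, then the inequality is strict unless x ∈ argmin f (quasi strict nonexpansiveness). -/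
open Set Filter Topology

/-! Let `q = prox x` and let `x̄` minimize `f`. Along the segment `[q, x̄]` the function `f` does
not increase, so by minimality of `q` no point of that segment is closer to `x` than `q`; by the
triangle inequality, `[q, x]` is then perpendicular at `q` to `[q, x̄]`. Symmetry of
perpendicularity turns this around: no point of `[q, x]`, in particular not `x`, is closer
to `x̄` than `q`.

If equality `d(q, x̄) = d(x, x̄)` held with `q ≠ x`, uniform convexity would put the midpoint of
`[q, x]` strictly closer to `x̄` than `q`, which perpendicularity forbids. And `q = x` makes `x` a
minimizer: comparing `x` with the points of `[x, z]` gives `t (f x - f z) ≤ K t^p d(x, z)^p` for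
`t ∈ (0, 1]`, where `K = 1 / (p λ^(p-1))`, and `p > 1` lets `t → 0`. -/

/-- The geodesic segment from `q` to `a` is perpendicular at `q` to the geodesic segment
from `q` to `b`. -/
def Perp {G : Type*} [MetricSpace G] (geo : G → G → ℝ → G) (q a b : G) : Prop :=
  ∀ s ∈ Set.Icc (0:ℝ) 1, ∀ t ∈ Set.Icc (0:ℝ) 1,
    dist (geo q a s) q ≤ dist (geo q a s) (geo q b t)

lemma nonpos_of_forall_le_mul_rpow {a C r : ℝ} (hr : 0 < r)
    (h : ∀ t : ℝ, 0 < t → t ≤ 1 → a ≤ C * t ^ r) : a ≤ 0 := by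
  have hlim : Tendsto (fun t : ℝ => C * t ^ r) (𝓝[>] 0) (𝓝 0) := by
    have := ((Real.continuousAt_rpow_const 0 r (Or.inr hr.le)).const_mul C).tendsto
    rw [Real.zero_rpow hr.ne', mul_zero] at this
    exact this.mono_left nhdsWithin_le_nhds
  refine ge_of_tendsto hlim ?_
  filter_upwards [Ioc_mem_nhdsGT zero_lt_one] with t ht using h t ht.1 ht.2

section Geodesic

variable {G : Type*} [MetricSpace G] {geo : G → G → ℝ → G}

def IsPUniformlyConvex (geo : G → G → ℝ → G) (p c : ℝ) : Prop :=
  ∀ (x y z : G), ∀ t ∈ Icc (0:ℝ) 1,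
    dist z (geo x y t) ^ p
      ≤ (1 - t) * dist z x ^ p + t * dist z y ^ p - c / 2 * t * (1 - t) * dist x y ^ p

lemma geo_one
    (hgeo1 : ∀ (x y : G), ∀ t ∈ Icc (0:ℝ) 1, dist (geo x y t) y = (1 - t) * dist x y)
    (x y : G) : geo x y 1 = y := by
  simpa using hgeo1 x y 1 (right_mem_Icc.2 zero_le_one)

lemma perp_of_forall_dist_le
    (hgeo0 : ∀ (x y : G), ∀ t ∈ Icc (0:ℝ) 1, dist x (geo x y t) = t * dist x y)
    (hgeo1 : ∀ (x y : G), ∀ t ∈ Icc (0:ℝ) 1, dist (geo x y t) y = (1 - t) * dist x y)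
    {q a b : G} (h : ∀ t ∈ Icc (0:ℝ) 1, dist q a ≤ dist (geo q b t) a) :
    Perp geo q a b := by
  intro s hs t ht
  have htri := dist_triangle (geo q b t) (geo q a s) a
  rw [dist_comm _ q, hgeo0 q a s hs, dist_comm (geo q a s)]
  linarith [h t ht, hgeo1 q a s hs]

lemma dist_le_of_perp
    (hgeo1 : ∀ (x y : G), ∀ t ∈ Icc (0:ℝ) 1, dist (geo x y t) y = (1 - t) * dist x y)
    {q a b : G} (h : Perp geo q a b) {t : ℝ} (ht : t ∈ Icc (0:ℝ) 1) :
    dist a q ≤ dist a (geo q b t) := by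
  simpa only [geo_one hgeo1] using h 1 (right_mem_Icc.2 zero_le_one) t ht

lemma dist_lt_of_dist_eq_of_isPUniformlyConvex {p c : ℝ} (hp : 0 < p) (hc : 0 < c)
    (huc : IsPUniformlyConvex geo p c) {x y z : G} (hxy : x ≠ y) (h : dist z x = dist z y) :
    dist z (geo x y (1 / 2)) < dist z x := by
  have hmid := huc x y z (1 / 2) ⟨by norm_num, by norm_num⟩
  have hpos : 0 < dist x y ^ p := Real.rpow_pos_of_pos (dist_pos.2 hxy) p
  rw [← h] at hmid
  refine (Real.rpow_lt_rpow_iff dist_nonneg dist_nonneg hp).1 ?_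
  nlinarith

variable {f : G → ℝ} {K p : ℝ}

lemma dist_le_of_add_mul_rpow_le (hK : 0 < K) (hp : 0 < p) {x q w : G}
    (hmin : f q + K * dist q x ^ p ≤ f w + K * dist w x ^ p) (hf : f w ≤ f q) :
    dist q x ≤ dist w x := by
  refine (Real.rpow_le_rpow_iff dist_nonneg dist_nonneg hp).1 ?_
  nlinarith

lemma perp_of_isMin_add_mul_rpow (hK : 0 < K) (hp : 0 < p)
    (hgeo0 : ∀ (x y : G), ∀ t ∈ Icc (0:ℝ) 1, dist x (geo x y t) = t * dist x y)
    (hgeo1 : ∀ (x y : G), ∀ t ∈ Icc (0:ℝ) 1, dist (geo x y t) y = (1 - t) * dist x y)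
    (hconv : ∀ (x y : G), ∀ t ∈ Icc (0:ℝ) 1, f (geo x y t) ≤ (1 - t) * f x + t * f y)
    {x q xbar : G} (hq : ∀ w, f q + K * dist q x ^ p ≤ f w + K * dist w x ^ p)
    (hxbar : ∀ z, f xbar ≤ f z) : Perp geo q x xbar := by
  refine perp_of_forall_dist_le hgeo0 hgeo1 fun t ht => dist_le_of_add_mul_rpow_le hK hp (hq _) ?_
  nlinarith [hconv q xbar t ht, hxbar q, ht.1]

lemma isMin_of_forall_le_add_mul_rpow (hp : 1 < p)
    (hgeo0 : ∀ (x y : G), ∀ t ∈ Icc (0:ℝ) 1, dist x (geo x y t) = t * dist x y)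
    (hconv : ∀ (x y : G), ∀ t ∈ Icc (0:ℝ) 1, f (geo x y t) ≤ (1 - t) * f x + t * f y)
    {x : G} (hx : ∀ z, f x ≤ f z + K * dist z x ^ p) (z : G) : f x ≤ f z := by
  suffices f x - f z ≤ 0 by linarith
  refine nonpos_of_forall_le_mul_rpow (C := K * dist x z ^ p) (sub_pos.2 hp) fun t ht0 ht1 => ?_
  have ht : t ∈ Icc (0:ℝ) 1 := ⟨ht0.le, ht1⟩
  have hstep : dist (geo x z t) x ^ p = t * (t ^ (p - 1) * dist x z ^ p) := by
    rw [dist_comm, hgeo0 x z t ht, Real.mul_rpow ht0.le dist_nonneg, ← mul_assoc,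
      ← Real.rpow_one_add' ht0.le (by linarith), add_sub_cancel]
  have h := hx (geo x z t)
  rw [hstep] at h
  refine le_of_mul_le_mul_left ?_ ht0
  nlinarith [hconv x z t ht]

end Geodesic

theorem prox_quasi_nonexpansive_general {G : Type*} [MetricSpace G] (p c lam : ℝ)
    (hp : 1 < p) (hlam : 0 < lam)
    (geo : G → G → ℝ → G)
    (hgeo0 : ∀ (x y : G), ∀ t ∈ Set.Icc (0:ℝ) 1, dist x (geo x y t) = t * dist x y)
    (hgeo1 : ∀ (x y : G), ∀ t ∈ Set.Icc (0:ℝ) 1, dist (geo x y t) y = (1 - t) * dist x y)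
    (hsym : ∀ q a b : G, Perp geo q a b → Perp geo q b a)
    (f : G → ℝ)
    (hconv : ∀ (x y : G), ∀ t ∈ Set.Icc (0:ℝ) 1, f (geo x y t) ≤ (1 - t) * f x + t * f y)
    (prox : G → G)
    (hprox : ∀ x z : G,
      f (prox x) + 1 / (p * lam ^ (p - 1)) * dist (prox x) x ^ p
        ≤ f z + 1 / (p * lam ^ (p - 1)) * dist z x ^ p) :
    (∀ x xbar : G, (∀ z : G, f xbar ≤ f z) → dist (prox x) xbar ≤ dist x xbar) ∧
    ((0 < c → ∀ (x y z : G), ∀ t ∈ Set.Icc (0:ℝ) 1,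
        dist z (geo x y t) ^ p
          ≤ (1 - t) * dist z x ^ p + t * dist z y ^ p - c / 2 * t * (1 - t) * dist x y ^ p) →
      0 < c → ∀ x xbar : G, (∀ z : G, f xbar ≤ f z) → ¬ (∀ z : G, f x ≤ f z) →
        dist (prox x) xbar < dist x xbar) := by
  have hp0 : 0 < p := zero_lt_one.trans hp
  have hK : 0 < 1 / (p * lam ^ (p - 1)) := by positivity
  have hperp : ∀ x xbar, (∀ z, f xbar ≤ f z) → ∀ t ∈ Icc (0:ℝ) 1,
      dist xbar (prox x) ≤ dist xbar (geo (prox x) x t) := fun x xbar hxbar t ht =>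
    dist_le_of_perp hgeo1
      (hsym _ _ _ (perp_of_isMin_add_mul_rpow hK hp0 hgeo0 hgeo1 hconv (hprox x) hxbar)) ht
  have hle : ∀ x xbar, (∀ z, f xbar ≤ f z) → dist (prox x) xbar ≤ dist x xbar := by
    intro x xbar hxbar
    simpa only [geo_one hgeo1, dist_comm xbar] using
      hperp x xbar hxbar 1 (right_mem_Icc.2 zero_le_one)
  refine ⟨hle, fun huc hc x xbar hxbar hx => (hle x xbar hxbar).lt_of_ne fun heq => hx ?_⟩
  have hfix : prox x = x := by
    by_contra hne
    have hlt := dist_lt_of_dist_eq_of_isPUniformlyConvex hp0 hc (huc hc) hne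
      (by rw [dist_comm xbar, dist_comm xbar, heq])
    exact (hperp x xbar hxbar (1 / 2) ⟨by norm_num, by norm_num⟩).not_gt hlt
  refine isMin_of_forall_le_add_mul_rpow (K := 1 / (p * lam ^ (p - 1))) hp hgeo0 hconv fun z => ?_
  simpa only [hfix, dist_self, Real.zero_rpow hp0.ne', mul_zero, add_zero] using hprox x z

/-- In a symmetric perpendicular geodesic space, the proximal mapping of a proper convex lsc
function is quasi nonexpansive with respect to minimizers of `f`; if the space is moreover
`p`-uniformly convex with constant `c > 0`, the inequality is strict unless `x` itself is a
minimizer. -/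
theorem prox_quasi_nonexpansive {G : Type*} [MetricSpace G] (p c lam : ℝ)
    (hp : 1 < p) (hlam : 0 < lam)
    (geo : G → G → ℝ → G)
    (hgeo0 : ∀ (x y : G), ∀ t ∈ Set.Icc (0:ℝ) 1, dist x (geo x y t) = t * dist x y)
    (hgeo1 : ∀ (x y : G), ∀ t ∈ Set.Icc (0:ℝ) 1, dist (geo x y t) y = (1 - t) * dist x y)
    (hsym : ∀ q a b : G, Perp geo q a b → Perp geo q b a)
    (f : G → ℝ) (hlsc : LowerSemicontinuous f)
    (hconv : ∀ (x y : G), ∀ t ∈ Set.Icc (0:ℝ) 1, f (geo x y t) ≤ (1 - t) * f x + t * f y)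
    (hargmin : ∃ z : G, ∀ w : G, f z ≤ f w)
    (prox : G → G)
    (hprox : ∀ x z : G,
      f (prox x) + 1 / (p * lam ^ (p - 1)) * dist (prox x) x ^ p
        ≤ f z + 1 / (p * lam ^ (p - 1)) * dist z x ^ p) :
    (∀ x xbar : G, (∀ z : G, f xbar ≤ f z) → dist (prox x) xbar ≤ dist x xbar) ∧
    ((0 < c → ∀ (x y z : G), ∀ t ∈ Set.Icc (0:ℝ) 1,
        dist z (geo x y t) ^ p
          ≤ (1 - t) * dist z x ^ p + t * dist z y ^ p - c / 2 * t * (1 - t) * dist x y ^ p) →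
      0 < c → ∀ x xbar : G, (∀ z : G, f xbar ≤ f z) → ¬ (∀ z : G, f x ≤ f z) →
        dist (prox x) xbar < dist x xbar) :=
  prox_quasi_nonexpansive_general p c lam hp hlam geo hgeo0 hgeo1 hsym f hconv prox hprox
end

section
/- Let (G,d) be a p-uniformly convex space with constant c ∈ (1,2], and f, g: G → ℝ ∪ {+∞} proper convex lsc with Ω := argmin f ∩ argmin g ≠ ∅. Then T := prox^p_{f,λ₂} ∘ prox^p_{g,λ₁} is pointwise almost α-firmly nonexpansive at every y ∈ Ω on G with constant α∘ = 2(c−1)/(2c−1) and violation ε∘ = 1/(c−1)² − 1. -/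
/-!
Both prox mappings satisfy `(c - 1) d(Px, y)^p ≤ d(x, y)^p - d(Px, x)^p` at a common minimizer
`y`, so chaining them bounds `d(T x, y)^p` by `d(x, y)^p` minus a weighted sum of the two step
lengths `d(proxg x, x)^p` and `d(T x, proxg x)^p`. Uniform convexity along the geodesic from
`T x` to `x`, evaluated at the point `proxg x`, bounds that weighted sum from below by a multiple
of `d(T x, x)^p`, the length of the composite step.
-/

open Set

section UniformConvexity

variable {G : Type*} [MetricSpace G]

def PUniformlyConvex (geo : G → G → ℝ → G) (p c : ℝ) : Prop :=
  ∀ x y z : G, ∀ t ∈ Icc (0 : ℝ) 1,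
    dist z (geo x y t) ^ p
      ≤ (1 - t) * dist z x ^ p + t * dist z y ^ p - c / 2 * t * (1 - t) * dist x y ^ p

/-- Evaluate the uniform convexity inequality at `t = b / (a + b)`. -/
theorem PUniformlyConvex.mul_dist_rpow_le {geo : G → G → ℝ → G} {p c : ℝ}
    (hG : PUniformlyConvex geo p c) (x y z : G) {a b : ℝ} (ha : 0 < a) (hb : 0 < b) :
    c / 2 * (a * b / (a + b)) * dist x y ^ p ≤ a * dist z x ^ p + b * dist z y ^ p := by
  have hab : 0 < a + b := add_pos ha hb
  have ht : b / (a + b) ∈ Icc (0 : ℝ) 1 := ⟨by positivity, (div_le_one hab).2 (by linarith)⟩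
  have h := (hG x y z _ ht).trans' (Real.rpow_nonneg dist_nonneg _)
  rw [one_sub_div hab.ne', add_sub_cancel_right] at h
  field_simp at h ⊢
  linarith

end UniformConvexity

section Composition

variable {G : Type*} [MetricSpace G]

def AlmostFirmlyNonexpansiveAt (p c α ε : ℝ) (T : G → G) (y : G) : Prop :=
  ∀ x : G, dist (T x) y ^ p ≤ (1 + ε) * dist x y ^ p - (1 - α) / α * (c / 2 * dist (T x) x ^ p)

noncomputable def compAlpha (c α₀ α₁ : ℝ) : ℝ :=
  (α₀ + α₁ - 2 * α₀ * α₁)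
    / (c / 2 * (1 - α₀ - α₁ + α₀ * α₁) + α₀ + α₁ - 2 * α₀ * α₁)

/-- With `κ = (1 - α) / α`, composition combines the constants like resistors in parallel. -/
theorem one_sub_compAlpha_div_compAlpha {c α₀ α₁ : ℝ} (hc : 0 < c)
    (hα₀ : α₀ ∈ Ioo (0 : ℝ) 1) (hα₁ : α₁ ∈ Ioo (0 : ℝ) 1) :
    (1 - compAlpha c α₀ α₁) / compAlpha c α₀ α₁
      = c / 2 * ((1 - α₀) / α₀ * ((1 - α₁) / α₁) / ((1 - α₀) / α₀ + (1 - α₁) / α₁)) := by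
  obtain ⟨h0, h0'⟩ := hα₀
  obtain ⟨h1, h1'⟩ := hα₁
  have hQ : 0 < (1 - α₀) * (1 - α₁) := mul_pos (sub_pos.2 h0') (sub_pos.2 h1')
  have hN : 0 < α₀ + α₁ - 2 * α₀ * α₁ := by nlinarith
  have hD : 0 < c / 2 * (1 - α₀ - α₁ + α₀ * α₁) + α₀ + α₁ - 2 * α₀ * α₁ := by nlinarith
  have hL : (1 - compAlpha c α₀ α₁) / compAlpha c α₀ α₁
      = c / 2 * ((1 - α₀) * (1 - α₁) / (α₀ + α₁ - 2 * α₀ * α₁)) := by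
    rw [compAlpha, one_sub_div hD.ne', div_div_div_cancel_right₀ hD.ne']
    ring
  have hR : (1 - α₀) / α₀ * ((1 - α₁) / α₁) / ((1 - α₀) / α₀ + (1 - α₁) / α₁)
      = (1 - α₀) * (1 - α₁) / (α₀ + α₁ - 2 * α₀ * α₁) := by
    rw [div_add_div _ _ h0.ne' h1.ne', div_mul_div_comm, div_div_div_cancel_right₀ (by positivity)]
    ring
  rw [hL, hR]

theorem AlmostFirmlyNonexpansiveAt.comp {p c α₀ α₁ ε₀ ε₁ : ℝ} {T₀ T₁ : G → G} {y : G}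
    {geo : G → G → ℝ → G} (hG : PUniformlyConvex geo p c) (hc : 0 < c)
    (hα₀ : α₀ ∈ Ioo (0 : ℝ) 1) (hα₁ : α₁ ∈ Ioo (0 : ℝ) 1) (hε₀ : 0 ≤ ε₀)
    (h₀ : AlmostFirmlyNonexpansiveAt p c α₀ ε₀ T₀ y)
    (h₁ : AlmostFirmlyNonexpansiveAt p c α₁ ε₁ T₁ y) :
    AlmostFirmlyNonexpansiveAt p c (compAlpha c α₀ α₁) (ε₀ + ε₁ + ε₀ * ε₁) (T₀ ∘ T₁) y := by
  intro x
  set κ₀ := (1 - α₀) / α₀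
  set κ₁ := (1 - α₁) / α₁
  have hκ₀ : 0 < κ₀ := div_pos (by linarith [hα₀.2]) hα₀.1
  have hκ₁ : 0 < κ₁ := div_pos (by linarith [hα₁.2]) hα₁.1
  have hstep : 0 ≤ dist (T₁ x) x ^ p := Real.rpow_nonneg dist_nonneg _
  have hsteps : c / 2 * (κ₀ * κ₁ / (κ₀ + κ₁)) * dist (T₀ (T₁ x)) x ^ p
      ≤ κ₀ * dist (T₀ (T₁ x)) (T₁ x) ^ p + κ₁ * dist (T₁ x) x ^ p := by
    simpa only [dist_comm (T₁ x)] using hG.mul_dist_rpow_le (T₀ (T₁ x)) x (T₁ x) hκ₀ hκ₁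
  rw [Function.comp_apply, one_sub_compAlpha_div_compAlpha hc hα₀ hα₁]
  calc dist (T₀ (T₁ x)) y ^ p
      ≤ (1 + ε₀) * dist (T₁ x) y ^ p - κ₀ * (c / 2 * dist (T₀ (T₁ x)) (T₁ x) ^ p) := h₀ (T₁ x)
    _ ≤ (1 + ε₀) * ((1 + ε₁) * dist x y ^ p - κ₁ * (c / 2 * dist (T₁ x) x ^ p))
          - κ₀ * (c / 2 * dist (T₀ (T₁ x)) (T₁ x) ^ p) := by
        gcongr
        exact h₁ x
    _ ≤ (1 + (ε₀ + ε₁ + ε₀ * ε₁)) * dist x y ^ p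
          - c / 2 * (κ₀ * dist (T₀ (T₁ x)) (T₁ x) ^ p + κ₁ * dist (T₁ x) x ^ p) := by
        linarith [mul_nonneg (mul_nonneg hε₀ hκ₁.le) (mul_nonneg hc.le hstep)]
    _ ≤ (1 + (ε₀ + ε₁ + ε₀ * ε₁)) * dist x y ^ p
          - c / 2 * (κ₀ * κ₁ / (κ₀ + κ₁)) * (c / 2 * dist (T₀ (T₁ x)) x ^ p) := by
        linarith [mul_le_mul_of_nonneg_left hsteps (by positivity : (0 : ℝ) ≤ c / 2)]

end Composition

theorem prox_comp_pafne_general {G : Type*} [MetricSpace G] (p c : ℝ)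
    (hc : c ∈ Set.Ioc (1:ℝ) 2)
    (geo : G → G → ℝ → G)
    (hcvx : ∀ (x y z : G), ∀ t ∈ Set.Icc (0:ℝ) 1,
      dist z (geo x y t) ^ p
        ≤ (1 - t) * dist z x ^ p + t * dist z y ^ p - c / 2 * t * (1 - t) * dist x y ^ p)
    (f g : G → ℝ)
    (proxf proxg : G → G)
    (hproxf : ∀ y : G, (∀ z, f y ≤ f z) → ∀ x : G,
      dist (proxf x) y ^ p
        ≤ (1 + (2 - c) / (c - 1)) * dist x y ^ p
          - (1 - c * (c - 1) / (c * (c - 1) + 2)) / (c * (c - 1) / (c * (c - 1) + 2))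
            * (c / 2 * dist (proxf x) x ^ p))
    (hproxg : ∀ y : G, (∀ z, g y ≤ g z) → ∀ x : G,
      dist (proxg x) y ^ p
        ≤ (1 + (2 - c) / (c - 1)) * dist x y ^ p
          - (1 - c * (c - 1) / (c * (c - 1) + 2)) / (c * (c - 1) / (c * (c - 1) + 2))
            * (c / 2 * dist (proxg x) x ^ p)) :
    ∀ y : G, (∀ z, f y ≤ f z) → (∀ z, g y ≤ g z) → ∀ x : G,
      dist (proxf (proxg x)) y ^ p
        ≤ (1 + (1 / (c - 1) ^ 2 - 1)) * dist x y ^ p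
          - (1 - 2 * (c - 1) / (2 * c - 1)) / (2 * (c - 1) / (2 * c - 1))
            * (c / 2 * dist (proxf (proxg x)) x ^ p) := by
  intro y hf hg
  obtain ⟨hc1, hc2⟩ := hc
  have hc0 : 0 < c - 1 := sub_pos.2 hc1
  have hα : c * (c - 1) / (c * (c - 1) + 2) ∈ Ioo (0 : ℝ) 1 :=
    ⟨by positivity, (div_lt_one (by positivity)).2 (by linarith)⟩
  have hε : 0 ≤ (2 - c) / (c - 1) := div_nonneg (by linarith) hc0.le
  have hcomp := AlmostFirmlyNonexpansiveAt.comp hcvx (by linarith) hα hα hε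
    (hproxf y hf) (hproxg y hg)
  have hαcomp : compAlpha c (c * (c - 1) / (c * (c - 1) + 2)) (c * (c - 1) / (c * (c - 1) + 2))
      = 2 * (c - 1) / (2 * c - 1) := by
    have : 0 < 2 * c - 1 := by linarith
    have : 0 < c * (c - 1) := mul_pos (by linarith) hc0
    rw [compAlpha]
    field_simp
    rw [div_eq_div_iff (by ring_nf; linarith) (by linarith)]
    ring
  have hεcomp : (2 - c) / (c - 1) + (2 - c) / (c - 1) + (2 - c) / (c - 1) * ((2 - c) / (c - 1))
      = 1 / (c - 1) ^ 2 - 1 := by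
    field_simp
    ring
  rw [hαcomp, hεcomp] at hcomp
  exact hcomp

/-- Composition of two prox mappings in a `p`-uniformly convex space with constant
`c ∈ (1,2]` is pointwise almost `α`-firmly nonexpansive at every common minimizer with
constant `α∘ = 2(c−1)/(2c−1)` and violation `ε∘ = 1/(c−1)² − 1`. -/
theorem prox_comp_pafne {G : Type*} [MetricSpace G] (p c : ℝ)
    (hp : 1 < p) (hc : c ∈ Set.Ioc (1:ℝ) 2)
    (geo : G → G → ℝ → G)
    (hcvx : ∀ (x y z : G), ∀ t ∈ Set.Icc (0:ℝ) 1,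
      dist z (geo x y t) ^ p
        ≤ (1 - t) * dist z x ^ p + t * dist z y ^ p - c / 2 * t * (1 - t) * dist x y ^ p)
    (f g : G → ℝ) (hflsc : LowerSemicontinuous f) (hglsc : LowerSemicontinuous g)
    (hfconv : ∀ (x y : G), ∀ t ∈ Set.Icc (0:ℝ) 1, f (geo x y t) ≤ (1 - t) * f x + t * f y)
    (hgconv : ∀ (x y : G), ∀ t ∈ Set.Icc (0:ℝ) 1, g (geo x y t) ≤ (1 - t) * g x + t * g y)
    (lam₁ lam₂ : ℝ) (hlam₁ : 0 < lam₁) (hlam₂ : 0 < lam₂)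
    (proxf proxg : G → G)
    (hproxf_fix : ∀ y : G, (∀ z, f y ≤ f z) → proxf y = y)
    (hproxg_fix : ∀ y : G, (∀ z, g y ≤ g z) → proxg y = y)
    (hproxf : ∀ y : G, (∀ z, f y ≤ f z) → ∀ x : G,
      dist (proxf x) y ^ p
        ≤ (1 + (2 - c) / (c - 1)) * dist x y ^ p
          - (1 - c * (c - 1) / (c * (c - 1) + 2)) / (c * (c - 1) / (c * (c - 1) + 2))
            * (c / 2 * dist (proxf x) x ^ p))
    (hproxg : ∀ y : G, (∀ z, g y ≤ g z) → ∀ x : G,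
      dist (proxg x) y ^ p
        ≤ (1 + (2 - c) / (c - 1)) * dist x y ^ p
          - (1 - c * (c - 1) / (c * (c - 1) + 2)) / (c * (c - 1) / (c * (c - 1) + 2))
            * (c / 2 * dist (proxg x) x ^ p))
    (hΩ : ∃ y : G, (∀ z, f y ≤ f z) ∧ (∀ z, g y ≤ g z)) :
    ∀ y : G, (∀ z, f y ≤ f z) → (∀ z, g y ≤ g z) → ∀ x : G,
      dist (proxf (proxg x)) y ^ p
        ≤ (1 + (1 / (c - 1) ^ 2 - 1)) * dist x y ^ p
          - (1 - 2 * (c - 1) / (2 * c - 1)) / (2 * (c - 1) / (2 * c - 1))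
            * (c / 2 * dist (proxf (proxg x)) x ^ p) :=
  prox_comp_pafne_general p c hc geo hcvx f g proxf proxg hproxf hproxg
end

section
/- In a p-uniformly convex space (G,d) with constant c, for ω ∈ (0,1) and points x₁, x₂ ∈ G, the p-barycenter of the measure ν = ωδ_{x₁} + (1−ω)δ_{x₂}, i.e. the minimizer over z of ω d(z,x₁)^p + (1−ω) d(z,x₂)^p, lies on the geodesic [x₂, x₁] at parameter t̄ = 1/(((1−ω)/ω)^{1/(p−1)} + 1), that is, b_p(ν) = t̄ x₁ ⊕ (1−t̄) x₂. -/
/-!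
Among splittings `a + b ≥ d`, the weighted power sum `ω a ^ p + (1 - ω) b ^ p` is smallest at
the split where the derivatives balance, `ω a ^ (p - 1) = (1 - ω) b ^ (p - 1)`, which is
`a = (1 - t̄) d`, `b = t̄ d`. By the triangle inequality every `z` gives a splitting
`d(z, x₁) + d(z, x₂) ≥ d(x₁, x₂)`, and the point of the geodesic at parameter `1 - t̄` realises
the optimal one, so it is a minimiser. Minimisers are unique: by `p`-uniform convexity the
midpoint of two of them would do strictly better.
-/

open Set

noncomputable def twoPointParam (p ω : ℝ) : ℝ := 1 / (((1 - ω) / ω) ^ (1 / (p - 1)) + 1)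

lemma twoPointParam_mem_Ioo {p ω : ℝ} (hω : ω ∈ Ioo (0 : ℝ) 1) :
    twoPointParam p ω ∈ Ioo (0 : ℝ) 1 := by
  have hr : 0 < ((1 - ω) / ω) ^ (1 / (p - 1)) :=
    Real.rpow_pos_of_pos (div_pos (by linarith [hω.2]) hω.1) _
  refine ⟨by unfold twoPointParam; positivity, ?_⟩
  rw [twoPointParam, div_lt_one (by linarith)]
  linarith

lemma twoPointParam_balance {p ω : ℝ} (hp : 1 < p) (hω : ω ∈ Ioo (0 : ℝ) 1) :
    ω * (1 - twoPointParam p ω) ^ (p - 1) = (1 - ω) * twoPointParam p ω ^ (p - 1) := by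
  obtain ⟨hω0, hω1⟩ := hω
  set r : ℝ := ((1 - ω) / ω) ^ (1 / (p - 1))
  have hr : 0 < r := Real.rpow_pos_of_pos (div_pos (by linarith) hω0) _
  have hrp : r ^ (p - 1) = (1 - ω) / ω := by
    rw [← Real.rpow_mul (div_pos (by linarith) hω0).le, one_div,
      inv_mul_cancel₀ (by linarith), Real.rpow_one]
  have hsplit : 1 - twoPointParam p ω = r * twoPointParam p ω := by
    unfold twoPointParam
    field_simp
    ring
  rw [hsplit, Real.mul_rpow hr.le (by unfold twoPointParam; positivity), hrp]
  field_simp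

lemma Real.rpow_add_mul_sub_le_rpow {p x y : ℝ} (hp : 1 < p) (hx : 0 ≤ x) (hy : 0 ≤ y) :
    y ^ p + p * y ^ (p - 1) * (x - y) ≤ x ^ p := by
  rcases hy.eq_or_lt with rfl | hy
  · simp [Real.zero_rpow (by linarith : p ≠ 0), Real.zero_rpow (by linarith : p - 1 ≠ 0),
      Real.rpow_nonneg hx]
  have hbernoulli := one_add_mul_self_le_rpow_one_add (s := x / y - 1)
    (by linarith [div_nonneg hx hy.le]) hp.le
  rw [add_sub_cancel, Real.div_rpow hx hy.le, le_div_iff₀ (Real.rpow_pos_of_pos hy p)]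
    at hbernoulli
  have hyp : y ^ (p - 1) * y = y ^ p := by
    rw [← Real.rpow_add_one hy.ne' (p - 1), sub_add_cancel]
  calc y ^ p + p * y ^ (p - 1) * (x - y) = (1 + p * (x / y - 1)) * y ^ p := by
        rw [← hyp]; field_simp
    _ ≤ x ^ p := hbernoulli

lemma weighted_rpow_add_le_of_balanced {p ω a₀ b₀ a b : ℝ} (hp : 1 < p) (hω : ω ∈ Icc (0 : ℝ) 1)
    (ha₀ : 0 ≤ a₀) (hb₀ : 0 ≤ b₀) (hbal : ω * a₀ ^ (p - 1) = (1 - ω) * b₀ ^ (p - 1))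
    (ha : 0 ≤ a) (hb : 0 ≤ b) (hab : a₀ + b₀ ≤ a + b) :
    ω * a₀ ^ p + (1 - ω) * b₀ ^ p ≤ ω * a ^ p + (1 - ω) * b ^ p := by
  have hta := mul_le_mul_of_nonneg_left (Real.rpow_add_mul_sub_le_rpow hp ha ha₀) hω.1
  have htb := mul_le_mul_of_nonneg_left (Real.rpow_add_mul_sub_le_rpow hp hb hb₀)
    (sub_nonneg.mpr hω.2)
  have hslope : 0 ≤ ω * a₀ ^ (p - 1) := mul_nonneg hω.1 (Real.rpow_nonneg ha₀ _)
  have hgain : 0 ≤ ω * a₀ ^ (p - 1) * (a - a₀) + (1 - ω) * b₀ ^ (p - 1) * (b - b₀) := by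
    rw [← hbal, ← mul_add]
    exact mul_nonneg hslope (by linarith)
  nlinarith

section UniformlyConvex

variable {G : Type*} [MetricSpace G] {p c ω : ℝ} {geo : G → G → ℝ → G}

/-- The cost whose minimiser is the `p`-barycenter of `ω δ_{x₁} + (1 - ω) δ_{x₂}`. -/
noncomputable def twoPointCost (p ω : ℝ) (x₁ x₂ z : G) : ℝ :=
  ω * dist z x₁ ^ p + (1 - ω) * dist z x₂ ^ p

lemma twoPointCost_le_of_geodesic (hp : 1 < p) (hω : ω ∈ Ioo (0 : ℝ) 1)
    (hgeo0 : ∀ (x y : G), ∀ t ∈ Icc (0 : ℝ) 1, dist x (geo x y t) = t * dist x y)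
    (hgeo1 : ∀ (x y : G), ∀ t ∈ Icc (0 : ℝ) 1, dist (geo x y t) y = (1 - t) * dist x y)
    (x₁ x₂ z : G) :
    twoPointCost p ω x₁ x₂ (geo x₁ x₂ (1 - twoPointParam p ω)) ≤ twoPointCost p ω x₁ x₂ z := by
  obtain ⟨ht0, ht1⟩ := twoPointParam_mem_Ioo (p := p) hω
  set t := twoPointParam p ω
  have hs : 1 - t ∈ Icc (0 : ℝ) 1 := ⟨by linarith, by linarith⟩
  have hd₁ : dist (geo x₁ x₂ (1 - t)) x₁ = (1 - t) * dist x₁ x₂ := by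
    rw [dist_comm, hgeo0 x₁ x₂ _ hs]
  have hd₂ : dist (geo x₁ x₂ (1 - t)) x₂ = t * dist x₁ x₂ := by
    rw [hgeo1 x₁ x₂ _ hs, sub_sub_cancel]
  have hbal : ω * ((1 - t) * dist x₁ x₂) ^ (p - 1) = (1 - ω) * (t * dist x₁ x₂) ^ (p - 1) := by
    rw [Real.mul_rpow hs.1 dist_nonneg, Real.mul_rpow ht0.le dist_nonneg, ← mul_assoc,
      ← mul_assoc, twoPointParam_balance hp hω]
  have htri : (1 - t) * dist x₁ x₂ + t * dist x₁ x₂ ≤ dist z x₁ + dist z x₂ := by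
    rw [← add_mul, sub_add_cancel, one_mul, dist_comm z x₁]
    exact dist_triangle x₁ z x₂
  unfold twoPointCost
  rw [hd₁, hd₂]
  exact weighted_rpow_add_le_of_balanced hp (Ioo_subset_Icc_self hω)
    (mul_nonneg hs.1 dist_nonneg) (mul_nonneg ht0.le dist_nonneg) hbal
    dist_nonneg dist_nonneg htri

lemma twoPointCost_geo_half_le (hω : ω ∈ Icc (0 : ℝ) 1)
    (hcvx : ∀ (x y z : G), ∀ t ∈ Icc (0 : ℝ) 1,
      dist z (geo x y t) ^ p
        ≤ (1 - t) * dist z x ^ p + t * dist z y ^ p - c / 2 * t * (1 - t) * dist x y ^ p)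
    (x₁ x₂ y z : G) :
    twoPointCost p ω x₁ x₂ (geo y z (1 / 2))
      ≤ (twoPointCost p ω x₁ x₂ y + twoPointCost p ω x₁ x₂ z) / 2 - c / 8 * dist y z ^ p := by
  have hhalf : (1 / 2 : ℝ) ∈ Icc (0 : ℝ) 1 := by norm_num
  have h₁ := mul_le_mul_of_nonneg_left (hcvx y z x₁ _ hhalf) hω.1
  have h₂ := mul_le_mul_of_nonneg_left (hcvx y z x₂ _ hhalf) (sub_nonneg.mpr hω.2)
  simp only [twoPointCost, dist_comm _ x₁, dist_comm _ x₂]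
  linarith

lemma eq_of_twoPointCost_le (hc : 0 < c) (hω : ω ∈ Icc (0 : ℝ) 1)
    (hcvx : ∀ (x y z : G), ∀ t ∈ Icc (0 : ℝ) 1,
      dist z (geo x y t) ^ p
        ≤ (1 - t) * dist z x ^ p + t * dist z y ^ p - c / 2 * t * (1 - t) * dist x y ^ p)
    {x₁ x₂ b m : G} (hb : ∀ z, twoPointCost p ω x₁ x₂ b ≤ twoPointCost p ω x₁ x₂ z)
    (hm : twoPointCost p ω x₁ x₂ m ≤ twoPointCost p ω x₁ x₂ b) :
    b = m := by
  have hmid := twoPointCost_geo_half_le hω hcvx x₁ x₂ b m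
  have hpow : dist b m ^ p ≤ 0 := by
    nlinarith [hb (geo b m (1 / 2))]
  by_contra hne
  exact (Real.rpow_pos_of_pos (dist_pos.mpr hne) p).not_ge hpow

end UniformlyConvex

/-- The `p`-barycenter of `ω δ_{x₁} + (1−ω) δ_{x₂}` in a `p`-uniformly convex space lies on
the geodesic from `x₁` to `x₂` at parameter `1 − t̄` where
`t̄ = 1/(((1−ω)/ω)^{1/(p−1)} + 1)`. -/
theorem two_point_barycenter {G : Type*} [MetricSpace G] (p c : ℝ) (hp : 1 < p) (hc : 0 < c)
    (geo : G → G → ℝ → G)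
    (hcvx : ∀ (x y z : G), ∀ t ∈ Set.Icc (0:ℝ) 1,
      dist z (geo x y t) ^ p
        ≤ (1 - t) * dist z x ^ p + t * dist z y ^ p - c / 2 * t * (1 - t) * dist x y ^ p)
    (hgeo0 : ∀ (x y : G), ∀ t ∈ Set.Icc (0:ℝ) 1, dist x (geo x y t) = t * dist x y)
    (hgeo1 : ∀ (x y : G), ∀ t ∈ Set.Icc (0:ℝ) 1, dist (geo x y t) y = (1 - t) * dist x y)
    (ω : ℝ) (hω : ω ∈ Set.Ioo (0:ℝ) 1) (x₁ x₂ b : G)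
    (hb : ∀ z : G, ω * dist b x₁ ^ p + (1 - ω) * dist b x₂ ^ p
        ≤ ω * dist z x₁ ^ p + (1 - ω) * dist z x₂ ^ p) :
    b = geo x₁ x₂ (1 - 1 / (((1 - ω) / ω) ^ (1 / (p - 1)) + 1)) :=
  eq_of_twoPointCost_le hc (Ioo_subset_Icc_self hω) hcvx hb
    (twoPointCost_le_of_geodesic hp hω hgeo0 hgeo1 x₁ x₂ b)
end
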